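/- Let α > 0 and β ≤ 0 be real numbers with 1 + β/α > 0. Then there exist r ∈ (0,1] and q > 0 (one may take q = 2α + β) such that for all real numbers b and a ≥ 0: (q - β) b a² ≤ (1 - r) α q b² + (1 - r) a⁴. -/
import Mathlib


/-- For `α > 0`, `β ≤ 0` with `1 + β/α > 0`, there exist `r ∈ (0,1]` and `q > 0`
(one may take `q = 2α + β`) such that for all `b ∈ ℝ` and `a ≥ 0`:
`(q - β) b a² ≤ (1 - r) α q b² + (1 - r) a⁴`. -/
theorem stmt_2 (α β : ℝ) (hα : 0 < α) (hβ : β ≤ 0) (h : 1 + β / α > 0) :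
    ∃ r ∈ Set.Ioc (0:ℝ) 1, ∃ q > (0:ℝ), q = 2 * α + β ∧
      ∀ b a : ℝ, 0 ≤ a →
        (q - β) * b * a ^ 2 ≤ (1 - r) * α * q * b ^ 2 + (1 - r) * a ^ 4 := by
  have hab : 0 < α + β := by
    have := mul_pos h hα
    nlinarith [mul_pos h hα, div_mul_cancel₀ β hα.ne']
  set q : ℝ := 2 * α + β with hqdef
  have hq : 0 < q := by nlinarith
  have hαq : α / q < 1 := (div_lt_one hq).mpr (by nlinarith)
  set s : ℝ := Real.sqrt (α / q) with hsdef
  have hs0 : 0 ≤ s := Real.sqrt_nonneg _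
  have hs2 : s ^ 2 = α / q := by
    rw [hsdef, sq, Real.mul_self_sqrt (le_of_lt (div_pos hα hq))]
  have hs2q : s ^ 2 * q = α := by rw [hs2]; field_simp
  have hs1 : s < 1 := by
    nlinarith [Real.sq_sqrt (le_of_lt (div_pos hα hq))]
  refine ⟨1 - s, ⟨by linarith, by linarith⟩, q, hq, rfl, ?_⟩
  intro b a ha
  have h1 : (1:ℝ) - (1 - s) = s := by ring
  rw [h1]
  have key : 0 ≤ s * (s * q * b - a ^ 2) ^ 2 :=
    mul_nonneg hs0 (sq_nonneg _)
  have hqβ : q - β = 2 * α := by rw [hqdef]; ring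
  have e : s * α * q * b ^ 2 - 2 * α * b * a ^ 2 + s * a ^ 4
      = s * (s * q * b - a ^ 2) ^ 2 := by rw [← hs2q]; ring
  have e2 : (q - β) * b * a ^ 2 = 2 * α * b * a ^ 2 := by rw [hqβ]
  linarith [key, e]
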